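/- Let Γ be a countable group and (Γ_n)_{n∈ℕ} an increasing sequence of subgroups with ⋃_n Γ_n = Γ, and for each n let 𝒢_n be a family of subgroups of Γ_n with 𝒢_n ⊆ 𝒢_{n+1}. Let λ be the left regular representation of Γ on ℓ²(Γ). Suppose, for each n, r_n : Γ_n → ℓ²(Γ) is a quasi-cocycle for the restriction of λ to Γ_n, with defect D_n, which is proper relative to 𝒢_n (for every C > 0 there are a finite ℱ ⊆ 𝒢_n and finite H, K ⊆ Γ_n with {γ ∈ Γ_n : ‖r_n(γ)‖ ≤ C} ⊆ ⋃_{Σ∈ℱ} HΣK), and that: (1) sup_{m,n} sup_{γ ∈ Γ_{min(m,n)}} ‖r_n(γ) − r_m(γ)‖ < ∞; (2) sup_n D_n < ∞; (3) for every C > 0 there exists n_C ∈ ℕ such that for all n ≥ n_C, {γ ∈ Γ_{n+1} : ‖r_{n+1}(γ)‖ ≤ C} ⊆ Γ_n. Then Γ admits a quasi-cocycle relative to the family ⋃_n 𝒢_n into ℓ²(Γ) with respect to λ; in fact the map r(γ) := r_{n(γ)}(γ), where n(γ) is the smallest n with γ ∈ Γ_n, is such a quasi-cocycle. -/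
import Mathlib


/-- A *quasi-cocycle relative to the family `G` of subgroups* for a unitary representation
`π : Γ → U(H)`: uniformly bounded defect, and sublevel sets contained in finite unions of
sets `h·Σ·k` with `Σ ∈ G`. -/
def IsRelativeQuasicocycle {Γ H : Type*} [Group Γ] [NormedAddCommGroup H]
    [InnerProductSpace ℂ H] (π : Γ →* (H ≃ₗᵢ[ℂ] H)) (G : Set (Subgroup Γ))
    (q : Γ → H) : Prop :=
  (∃ D : ℝ, ∀ γ δ : Γ, ‖q (γ * δ) - π γ (q δ) - q γ‖ ≤ D) ∧
  (∀ C : ℝ, 0 < C → ∃ (F : Finset (Subgroup Γ)) (S T : Finset Γ),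
    (F : Set (Subgroup Γ)) ⊆ G ∧
    ∀ γ : Γ, ‖q γ‖ ≤ C → ∃ Sg ∈ F, ∃ h ∈ S, ∃ k ∈ T, ∃ σ ∈ Sg, γ = h * σ * k)

set_option maxHeartbeats 1000000 in
/-- an inductive limit of relative quasi-cocycles `rₙ` on an increasing union
`Γ = ⋃ₙ Γₙ`, with uniformly close restrictions, uniformly bounded defects and the sublevel
condition (3), yields a quasi-cocycle on `Γ` relative to `⋃ₙ Gₙ`; in fact
`r(γ) := r_{n(γ)}(γ)` with `n(γ)` the least `n` with `γ ∈ Γₙ` is such a quasi-cocycle. -/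
theorem isRelativeQuasicocycle_of_inductive_limit
    {Γ : Type*} [Group Γ] [Countable Γ]
    (lam : Γ →* (lp (fun _ : Γ => ℂ) 2 ≃ₗᵢ[ℂ] lp (fun _ : Γ => ℂ) 2))
    (hreg : ∀ (g : Γ) (ξ : lp (fun _ : Γ => ℂ) 2) (x : Γ), lam g ξ x = ξ (g⁻¹ * x))
    (Γs : ℕ → Subgroup Γ) (hmono : ∀ n : ℕ, Γs n ≤ Γs (n + 1))
    (hunion : ∀ γ : Γ, ∃ n : ℕ, γ ∈ Γs n)
    (G : ℕ → Set (Subgroup Γ)) (hGsub : ∀ n : ℕ, ∀ Sg ∈ G n, Sg ≤ Γs n)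
    (hGmono : ∀ n : ℕ, G n ⊆ G (n + 1))
    (r : ℕ → Γ → lp (fun _ : Γ => ℂ) 2) (D : ℕ → ℝ)
    (hqc : ∀ n : ℕ, ∀ γ ∈ Γs n, ∀ δ ∈ Γs n,
      ‖r n (γ * δ) - lam γ (r n δ) - r n γ‖ ≤ D n)
    (hprop : ∀ n : ℕ, ∀ C : ℝ, 0 < C → ∃ (F : Finset (Subgroup Γ)) (S T : Finset Γ),
      (F : Set (Subgroup Γ)) ⊆ G n ∧ (S : Set Γ) ⊆ Γs n ∧ (T : Set Γ) ⊆ Γs n ∧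
      ∀ γ ∈ Γs n, ‖r n γ‖ ≤ C → ∃ Sg ∈ F, ∃ h ∈ S, ∃ k ∈ T, ∃ σ ∈ Sg, γ = h * σ * k)
    (B : ℝ) (hclose : ∀ m n : ℕ, ∀ γ ∈ Γs (min m n), ‖r n γ - r m γ‖ ≤ B)
    (D' : ℝ) (hD : ∀ n : ℕ, D n ≤ D')
    (hlevel : ∀ C : ℝ, 0 < C → ∃ N : ℕ, ∀ n ≥ N, ∀ γ ∈ Γs (n + 1),
      ‖r (n + 1) γ‖ ≤ C → γ ∈ Γs n) :
    ∃ R : Γ → lp (fun _ : Γ => ℂ) 2,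
      IsRelativeQuasicocycle lam (⋃ n : ℕ, G n) R ∧
      ∀ (γ : Γ) (n : ℕ), γ ∈ Γs n → (∀ m : ℕ, m < n → γ ∉ Γs m) → R γ = r n γ := by
  classical
  have hmono' : ∀ {m n : ℕ}, m ≤ n → Γs m ≤ Γs n := by
    intro m n h
    induction h with
    | refl => exact le_rfl
    | step _ ih => exact ih.trans (hmono _)
  have hmem : ∀ γ : Γ, γ ∈ Γs (Nat.find (hunion γ)) := fun γ => Nat.find_spec (hunion γ)
  have hleast : ∀ (γ : Γ) (n : ℕ), γ ∈ Γs n → Nat.find (hunion γ) ≤ n :=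
    fun γ n h => Nat.find_le h
  set R : Γ → lp (fun _ : Γ => ℂ) 2 := fun γ => r (Nat.find (hunion γ)) γ with hR
  have hB : 0 ≤ B := by
    have := hclose 0 0 1 (by simpa using (Γs 0).one_mem)
    simpa using (norm_nonneg _).trans this
  have hcloseR : ∀ (γ : Γ) (N : ℕ), γ ∈ Γs N → ‖r N γ - R γ‖ ≤ B := by
    intro γ N hγ
    have hle : Nat.find (hunion γ) ≤ N := hleast γ N hγ
    have := hclose (Nat.find (hunion γ)) N γ (by rw [min_eq_left hle]; exact hmem γ)
    simpa [hR] using this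
  refine ⟨R, ⟨⟨D' + 3 * B, ?_⟩, ?_⟩, ?_⟩
  · intro γ δ
    set N := max (max (Nat.find (hunion γ)) (Nat.find (hunion δ))) (Nat.find (hunion (γ * δ)))
    have hγN : γ ∈ Γs N := hmono' (le_max_of_le_left (le_max_left _ _)) (hmem γ)
    have hδN : δ ∈ Γs N := hmono' (le_max_of_le_left (le_max_right _ _)) (hmem δ)
    have hγδN : γ * δ ∈ Γs N := hmono' (le_max_right _ _) (hmem (γ * δ))
    have hdef : ‖r N (γ * δ) - lam γ (r N δ) - r N γ‖ ≤ D' :=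
      (hqc N γ hγN δ hδN).trans (hD N)
    have h1 : ‖R (γ * δ) - r N (γ * δ)‖ ≤ B := by
      rw [norm_sub_rev]; exact hcloseR _ _ hγδN
    have h2 : ‖lam γ ((r N δ) - R δ)‖ ≤ B := by
      rw [LinearIsometryEquiv.norm_map]; exact hcloseR _ _ hδN
    have h3 : ‖r N γ - R γ‖ ≤ B := hcloseR _ _ hγN
    have heq : R (γ * δ) - lam γ (R δ) - R γ =
        (r N (γ * δ) - lam γ (r N δ) - r N γ) + (R (γ * δ) - r N (γ * δ))
          + lam γ ((r N δ) - R δ) + (r N γ - R γ) := by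
      rw [map_sub]; abel
    calc ‖R (γ * δ) - lam γ (R δ) - R γ‖
        ≤ ‖r N (γ * δ) - lam γ (r N δ) - r N γ‖ + ‖R (γ * δ) - r N (γ * δ)‖
          + ‖lam γ ((r N δ) - R δ)‖ + ‖r N γ - R γ‖ := by
          rw [heq]
          exact (norm_add_le _ _).trans (by
            gcongr
            exact (norm_add_le _ _).trans (by gcongr; exact norm_add_le _ _))
      _ ≤ D' + B + B + B := by gcongr
      _ = D' + 3 * B := by ring
  · intro C hC
    have hCB : 0 < C + B := by linarith
    obtain ⟨N₀, hN₀⟩ := hlevel (C + B) hCB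
    have key : ∀ (k : ℕ) (γ : Γ), γ ∈ Γs (N₀ + k) → ‖R γ‖ ≤ C → γ ∈ Γs N₀ := by
      intro k
      induction k with
      | zero => intro γ h _; exact h
      | succ k ih =>
        intro γ h hγ
        refine ih γ (hN₀ (N₀ + k) (Nat.le_add_right _ _) γ h ?_) hγ
        calc ‖r (N₀ + k + 1) γ‖ ≤ ‖R γ‖ + ‖r (N₀ + k + 1) γ - R γ‖ :=
              norm_le_norm_add_norm_sub' _ _
          _ ≤ C + B := add_le_add hγ (hcloseR γ _ h)
    obtain ⟨F, S, T, hF, _, _, hcov⟩ := hprop N₀ (C + B) hCB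
    refine ⟨F, S, T, hF.trans (Set.subset_iUnion G N₀), ?_⟩
    intro γ hγ
    have hγ0 : γ ∈ Γs N₀ :=
      key (Nat.find (hunion γ)) γ (hmono' (Nat.le_add_left _ _) (hmem γ)) hγ
    refine hcov γ hγ0 ?_
    calc ‖r N₀ γ‖ ≤ ‖R γ‖ + ‖r N₀ γ - R γ‖ := norm_le_norm_add_norm_sub' _ _
      _ ≤ C + B := add_le_add hγ (hcloseR γ _ hγ0)
  · intro γ n hn hnot
    have h1 : Nat.find (hunion γ) = n :=
      le_antisymm (hleast γ n hn) (le_of_not_gt fun h => hnot _ h (hmem γ))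
    rw [hR]
    simp only [h1]
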